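/- arXiv:0807.0862 — 2 statements merged into one kernel-verified Lean document; each statement's English description precedes it below -/
import Mathlib

section
/- For any nonzero integer m with |m| ≤ n (n ≥ 2), there exists a prime p ≤ C · log n (for an absolute constant C) such that p does not divide m. -/
/-!
The primes up to `x` have product `exp (θ x)`, and Chebyshev's lower bound gives
`θ x ≥ (log 2 / 2) x` for large `x`. If every prime `p ≤ x` divides `m ≠ 0`, then so does
their product, so `θ x ≤ log |m| ≤ log n`; taking `x = C log n` with `C` large contradicts
this.
-/

open Real Filter Asymptotics Chebyshev

theorem eventually_log_two_div_two_mul_le_theta :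
    ∀ᶠ x : ℝ in atTop, log 2 / 2 * x ≤ θ x := by
  have h_log_shift : (fun x : ℝ ↦ log (x + 2)) =o[atTop] id :=
    (isLittleO_log_id_atTop.comp_tendsto
      (tendsto_atTop_add_const_right _ 2 tendsto_id)).trans_isBigO
      ((isBigO_refl id atTop).add (isLittleO_const_id_atTop (2 : ℝ)).isBigO)
  have h_sqrt_mul_log : (fun x : ℝ ↦ 2 * √x * log x) =o[atTop] id := by
    have h_log : log =o[atTop] sqrt := by
      simpa only [← sqrt_eq_rpow] using isLittleO_log_rpow_atTop (r := 1 / 2) (by norm_num)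
    refine (((isBigO_refl sqrt atTop).const_mul_left 2).mul_isLittleO h_log).congr' .rfl ?_
    filter_upwards [eventually_ge_atTop 0] with x hx
    simp [mul_self_sqrt hx]
  have h_error : (fun x : ℝ ↦ log 2 + log (x + 2) + 2 * √x * log x) =o[atTop] id :=
    ((isLittleO_const_id_atTop _).add h_log_shift).add h_sqrt_mul_log
  filter_upwards [h_error.def (half_pos (log_pos one_lt_two)), eventually_ge_atTop 1]
    with x h_error_le hx
  rw [norm_eq_abs, id, norm_of_nonneg (by linarith)] at h_error_le
  linarith [theta_ge' hx, le_abs_self (log 2 + log (x + 2) + 2 * √x * log x)]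

theorem theta_le_log_natAbs_of_forall_prime_dvd {x : ℝ} {m : ℤ} (hm : m ≠ 0)
    (h : ∀ p : ℕ, p.Prime → (p : ℝ) ≤ x → (p : ℤ) ∣ m) : θ x ≤ log m.natAbs := by
  have h_dvd : primorial ⌊x⌋₊ ∣ m.natAbs := by
    refine Finset.prod_primes_dvd _ (fun p hp ↦ (Nat.mem_primesLE.1 hp).2.prime) fun p hp ↦ ?_
    obtain ⟨hpx, hp⟩ := Nat.mem_primesLE.1 hp
    exact Int.natCast_dvd.1 (h p hp ((Nat.le_floor_iff' hp.ne_zero).1 hpx))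
  rw [theta_eq_log_primorial]
  exact log_le_log (by exact_mod_cast primorial_pos _)
    (by exact_mod_cast Nat.le_of_dvd (Int.natAbs_pos.2 hm) h_dvd)

/-- For any nonzero integer `m` with `|m| ≤ n` (`n ≥ 2`) there is a prime
`p ≤ C · log n` not dividing `m`, for an absolute constant `C`. -/
theorem grig_stmt5 :
    ∃ C : ℝ, 0 < C ∧ ∀ (n : ℕ) (m : ℤ), 2 ≤ n → m ≠ 0 → m.natAbs ≤ n →
      ∃ p : ℕ, p.Prime ∧ (p : ℝ) ≤ C * Real.log n ∧ ¬ ((p : ℤ) ∣ m) := by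
  obtain ⟨N, hN⟩ := eventually_atTop.1 eventually_log_two_div_two_mul_le_theta
  have hlog2 : 0 < log 2 := log_pos one_lt_two
  refine ⟨max (4 / log 2) (N / log 2), by positivity, fun n m hn hm hmn ↦ ?_⟩
  by_contra! h_all
  set C := max (4 / log 2) (N / log 2)
  have hlogn : log 2 ≤ log n := log_le_log two_pos (by exact_mod_cast hn)
  have h_upper : θ (C * log n) ≤ log n :=
    (theta_le_log_natAbs_of_forall_prime_dvd hm h_all).trans
      (log_le_log (by exact_mod_cast Int.natAbs_pos.2 hm) (by exact_mod_cast hmn))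
  have h_lower : log 2 / 2 * (C * log n) ≤ θ (C * log n) := by
    refine hN _ ?_
    calc (N : ℝ) = N / log 2 * log 2 := by field_simp
      _ ≤ C * log n := by gcongr; exact le_max_right _ _
  have h_large : 2 * log n ≤ log 2 / 2 * (C * log n) := calc
    2 * log n = log 2 / 2 * (4 / log 2 * log n) := by field_simp; ring
    _ ≤ log 2 / 2 * (C * log n) := by gcongr; exact le_max_left _ _
  linarith
end

section
/- Let G be a finitely generated group with generating set S that is not nilpotent. Then for every n ≥ 1 there exists a nontrivial element g ∈ G with word length ||g||_S ≤ C·2^n (C an absolute constant depending on S) such that g lies in the n-th term Γ_n(G) of the lower central series; consequently every finite nilpotent quotient of G in which g is nontrivial has nilpotency class at least n, hence order at least 2^n. -/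
/-!
In a group generated by `S`, the `k`-th term of the lower central series is the normal closure
of the left-normed commutators `[s₀, s₁, …, s_k]` with all `sᵢ ∈ S`: modulo the normal closure
of the depth-`(k+1)` commutators, every depth-`k` commutator commutes with the generators, hence
is central. A depth-`k` commutator has word length `3·2^k - 2`, since forming `[t, s]` doubles
the length and adds two. If `G` is not nilpotent, some depth-`(n-1)` commutator `g` is
nontrivial. Its image in a finite nilpotent quotient `Q` detecting it is a nontrivial element of
`Γ_n(Q)`, so `Q` has class `c ≥ n`; as the lower central series of `Q` strictly decreases down to
`Γ_{c+1}(Q) = 1`, each step at least halving the order, `|Q| ≥ 2^c ≥ 2^n`.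
-/

/-- `g` has word length at most `n` with respect to the generating set `S`. -/
def wordLenLE {G : Type*} [Group G] (S : Set G) (n : ℕ) (g : G) : Prop :=
  ∃ l : List G, l.length ≤ n ∧ (∀ x ∈ l, x ∈ S ∨ x⁻¹ ∈ S) ∧ l.prod = g

open scoped commutatorElement

namespace wordLenLE

variable {G : Type*} [Group G] {S : Set G} {a b : ℕ} {g h : G}

theorem of_mem (hg : g ∈ S) : wordLenLE S 1 g :=
  ⟨[g], le_rfl, by simpa using Or.inl hg, List.prod_singleton⟩

theorem mono (hg : wordLenLE S a g) (hab : a ≤ b) : wordLenLE S b g :=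
  let ⟨l, hl, hS, hprod⟩ := hg
  ⟨l, hl.trans hab, hS, hprod⟩

theorem inv (hg : wordLenLE S a g) : wordLenLE S a g⁻¹ := by
  obtain ⟨l, hl, hS, rfl⟩ := hg
  refine ⟨(l.map (·⁻¹)).reverse, by simpa using hl, ?_, (List.prod_inv_reverse l).symm⟩
  simp only [List.mem_reverse, List.mem_map]
  rintro _ ⟨x, hx, rfl⟩
  simpa [or_comm] using hS x hx

theorem mul (hg : wordLenLE S a g) (hh : wordLenLE S b h) : wordLenLE S (a + b) (g * h) := by
  obtain ⟨l₁, hl₁, hS₁, rfl⟩ := hg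
  obtain ⟨l₂, hl₂, hS₂, rfl⟩ := hh
  refine ⟨l₁ ++ l₂, by simp only [List.length_append]; omega, ?_, List.prod_append⟩
  simp only [List.mem_append]
  rintro x (hx | hx)
  exacts [hS₁ x hx, hS₂ x hx]

theorem commutatorElement (hg : wordLenLE S a g) (hh : wordLenLE S b h) :
    wordLenLE S (2 * a + 2 * b) ⁅g, h⁆ := by
  rw [commutatorElement_def]
  exact (((hg.mul hh).mul hg.inv).mul hh.inv).mono (by omega)

end wordLenLE

section LeftNormedCommutators

variable {G : Type*} [Group G]

/-- `[s₀, s₁, …, s_k] = ⁅⁅s₀, s₁⁆, …, s_k⁆` with all `sᵢ ∈ S`; the index `k` matches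
`lowerCentralSeries ⊤ k`, which is `Γ_{k+1}` in the usual numbering. -/
def leftNormedCommutators (S : Set G) : ℕ → Set G
  | 0 => S
  | k + 1 => Set.image2 (⁅·, ·⁆) (leftNormedCommutators S k) S

theorem wordLenLE_of_mem_leftNormedCommutators {S : Set G} :
    ∀ {k : ℕ} {g : G}, g ∈ leftNormedCommutators S k → wordLenLE S (3 * 2 ^ k - 2) g
  | 0, _, hg => wordLenLE.of_mem hg
  | k + 1, _, ⟨t, ht, s, hs, rfl⟩ => by
    have hpow : 1 ≤ 2 ^ k := Nat.one_le_two_pow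
    refine ((wordLenLE_of_mem_leftNormedCommutators ht).commutatorElement
      (wordLenLE.of_mem hs)).mono ?_
    rw [pow_succ]
    omega

theorem Subgroup.commutator_normalClosure_top {S : Set G} (hS : Subgroup.closure S = ⊤)
    (T : Set G) :
    ⁅Subgroup.normalClosure T, ⊤⁆ =
      Subgroup.normalClosure (Set.image2 (⁅·, ·⁆) T S) := by
  set N := Subgroup.normalClosure (Set.image2 (⁅·, ·⁆) T S)
  apply le_antisymm
  · -- modulo `N` the elements of `T` commute with the generators, so they are central
    let π := QuotientGroup.mk' N
    have hπS : Subgroup.closure (π '' S) = ⊤ := by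
      rw [← MonoidHom.map_closure, hS,
        Subgroup.map_top_of_surjective _ (QuotientGroup.mk'_surjective N)]
    have hT : Subgroup.map π (Subgroup.normalClosure T) ≤ Subgroup.center (G ⧸ N) := by
      rw [Subgroup.map_normalClosure _ _ (QuotientGroup.mk'_surjective N)]
      refine Subgroup.normalClosure_le_normal ?_
      rintro _ ⟨t, ht, rfl⟩
      rw [SetLike.mem_coe, ← Subgroup.centralizer_univ, ← Subgroup.coe_top, ← hπS,
        Subgroup.centralizer_closure]
      rintro _ ⟨s, hs, rfl⟩
      have : π ⁅t, s⁆ = 1 :=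
        (QuotientGroup.eq_one_iff _).mpr (Subgroup.subset_normalClosure ⟨t, ht, s, hs, rfl⟩)
      rw [map_commutatorElement] at this
      exact (commutatorElement_eq_one_iff_mul_comm.mp this).symm
    have hbot : Subgroup.map π ⁅Subgroup.normalClosure T, ⊤⁆ = ⊥ := by
      rw [Subgroup.map_commutator, Subgroup.commutator_eq_bot_iff_le_centralizer]
      exact hT.trans (Subgroup.center_le_centralizer _)
    simpa [π] using (Subgroup.map_eq_bot_iff _).mp hbot
  · refine Subgroup.normalClosure_le_normal ?_
    rintro _ ⟨t, ht, s, -, rfl⟩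
    exact Subgroup.commutator_mem_commutator (Subgroup.subset_normalClosure ht) (Subgroup.mem_top s)

theorem normalClosure_leftNormedCommutators {S : Set G} (hS : Subgroup.closure S = ⊤) :
    ∀ k : ℕ, Subgroup.normalClosure (leftNormedCommutators S k) =
      (⊤ : Subgroup G).lowerCentralSeries k
  | 0 => eq_top_iff.mpr (hS ▸ Subgroup.closure_le_normalClosure)
  | k + 1 => by
    rw [Subgroup.lowerCentralSeries_succ, ← normalClosure_leftNormedCommutators hS k,
      Subgroup.commutator_normalClosure_top hS]
    rfl

end LeftNormedCommutators

section FiniteNilpotent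

variable {Q : Type*} [Group Q]

theorem Subgroup.two_mul_card_le_of_lt {H K : Subgroup Q} [Finite K] (h : H < K) :
    2 * Nat.card H ≤ Nat.card K := by
  obtain ⟨m, hm⟩ := Subgroup.card_dvd_of_le h.le
  have hm2 : 2 ≤ m := by
    by_contra! hm1
    have : Nat.card K ≤ Nat.card H :=
      hm ▸ (Nat.mul_le_mul_left _ (by omega : m ≤ 1)).trans_eq (mul_one _)
    exact h.ne (Subgroup.eq_of_le_of_card_ge h.le this)
  rw [hm, mul_comm 2]
  exact Nat.mul_le_mul_left _ hm2

theorem Subgroup.two_pow_mul_card_le_of_lt_succ [Finite Q] {H : ℕ → Subgroup Q} {n : ℕ}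
    (hH : ∀ k < n, H (k + 1) < H k) : 2 ^ n * Nat.card (H n) ≤ Nat.card (H 0) := by
  induction n with
  | zero => simp
  | succ n ih =>
    calc 2 ^ (n + 1) * Nat.card (H (n + 1))
        = 2 ^ n * (2 * Nat.card (H (n + 1))) := by ring
      _ ≤ 2 ^ n * Nat.card (H n) :=
        Nat.mul_le_mul_left _ (Subgroup.two_mul_card_le_of_lt (hH n n.lt_succ_self))
      _ ≤ Nat.card (H 0) := ih fun k hk => hH k (by omega)

variable [Group.IsNilpotent Q]

theorem lt_nilpotencyClass_of_mem_lowerCentralSeries {k : ℕ} {x : Q}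
    (hx : x ∈ (⊤ : Subgroup Q).lowerCentralSeries k) (hx1 : x ≠ 1) :
    k < Group.nilpotencyClass Q := by
  by_contra! hk
  rw [← Subgroup.lowerCentralSeries_eq_bot_iff_nilpotencyClass_le] at hk
  exact hx1 (Subgroup.mem_bot.mp (hk ▸ hx))

theorem lowerCentralSeries_succ_lt {k : ℕ} (hk : k < Group.nilpotencyClass Q) :
    (⊤ : Subgroup Q).lowerCentralSeries (k + 1) < (⊤ : Subgroup Q).lowerCentralSeries k := by
  refine (Subgroup.lowerCentralSeries_antitone _ k.le_succ).lt_of_ne fun heq => ?_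
  -- once the series is stationary it stays so, and it does reach `⊥`
  have hstab (m : ℕ) :
      (⊤ : Subgroup Q).lowerCentralSeries (k + m) = (⊤ : Subgroup Q).lowerCentralSeries k := by
    induction m with
    | zero => rfl
    | succ m ih =>
      rw [← add_assoc, Subgroup.lowerCentralSeries_succ, ih,
        ← Subgroup.lowerCentralSeries_succ, heq]
  have hbot := hstab (Group.nilpotencyClass Q - k)
  rw [Nat.add_sub_cancel' hk.le, Subgroup.lowerCentralSeries_nilpotencyClass] at hbot
  exact hk.not_ge (Subgroup.lowerCentralSeries_eq_bot_iff_nilpotencyClass_le.mp hbot.symm)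

theorem two_pow_nilpotencyClass_le_card [Finite Q] :
    2 ^ Group.nilpotencyClass Q ≤ Nat.card Q := by
  have := Subgroup.two_pow_mul_card_le_of_lt_succ (H := (⊤ : Subgroup Q).lowerCentralSeries)
    fun _ => lowerCentralSeries_succ_lt
  rw [Subgroup.lowerCentralSeries_nilpotencyClass, Subgroup.lowerCentralSeries_zero,
    Subgroup.card_bot, Subgroup.card_top, mul_one] at this
  exact this

end FiniteNilpotent

theorem grig_stmt11_general {G : Type*} [Group G] (S : Set G)
    (hSgen : Subgroup.closure S = ⊤) (hnotnil : ¬ Group.IsNilpotent G) :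
    ∃ C : ℕ, 0 < C ∧ ∀ n : ℕ, 1 ≤ n →
      ∃ g : G, g ≠ 1 ∧ wordLenLE S (C * 2 ^ n) g ∧ g ∈ (⊤ : Subgroup G).lowerCentralSeries (n - 1) ∧
        ∀ (N : Subgroup G) [N.Normal], g ∉ N → Finite (G ⧸ N) →
          ∀ hnil : Group.IsNilpotent (G ⧸ N),
            n ≤ Group.nilpotencyClass (G ⧸ N) ∧ 2 ^ n ≤ Nat.card (G ⧸ N) := by
  refine ⟨2, two_pos, fun n hn => ?_⟩
  have hΓ := normalClosure_leftNormedCommutators hSgen (n - 1)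
  obtain ⟨g, hg, hg1⟩ : ∃ g ∈ leftNormedCommutators S (n - 1), g ≠ 1 := by
    by_contra! h
    refine hnotnil (Subgroup.nilpotent_iff_lowerCentralSeries.mpr ⟨n - 1, ?_⟩)
    rwa [← hΓ, Subgroup.normalClosure_eq_bot_iff]
  have hgΓ : g ∈ (⊤ : Subgroup G).lowerCentralSeries (n - 1) :=
    hΓ ▸ Subgroup.subset_normalClosure hg
  refine ⟨g, hg1, (wordLenLE_of_mem_leftNormedCommutators hg).mono ?_, hgΓ,
    fun N _ hgN _ _ => ?_⟩
  · obtain ⟨m, rfl⟩ := Nat.exists_eq_add_of_le' hn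
    rw [Nat.add_sub_cancel, pow_succ]
    omega
  have hgQ : (g : G ⧸ N) ∈ (⊤ : Subgroup (G ⧸ N)).lowerCentralSeries (n - 1) := by
    have := Subgroup.mem_map_of_mem (QuotientGroup.mk' N) hgΓ
    rw [Subgroup.map_lowerCentralSeries] at this
    exact Subgroup.lowerCentralSeries_mono _ le_top this
  have hclass := lt_nilpotencyClass_of_mem_lowerCentralSeries hgQ
    (mt (QuotientGroup.eq_one_iff g).mp hgN)
  exact ⟨by omega,
    (Nat.pow_le_pow_right two_pos (by omega)).trans two_pow_nilpotencyClass_le_card⟩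

/-- If `G` is finitely generated by `S` and not nilpotent, then for every `n ≥ 1`
there is a nontrivial `g ∈ Γ_n(G)` of word length at most `C·2^n`, and any finite
nilpotent quotient detecting `g` has class at least `n` and order at least `2^n`.
(Here `Γ_n(G)` is `lowerCentralSeries G (n-1)` since Mathlib starts at index 0.) -/
theorem grig_stmt11 {G : Type*} [Group G] (S : Set G) (hSfin : S.Finite)
    (hSgen : Subgroup.closure S = ⊤) (hnotnil : ¬ Group.IsNilpotent G) :
    ∃ C : ℕ, 0 < C ∧ ∀ n : ℕ, 1 ≤ n →
      ∃ g : G, g ≠ 1 ∧ wordLenLE S (C * 2 ^ n) g ∧ g ∈ (⊤ : Subgroup G).lowerCentralSeries (n - 1) ∧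
        ∀ (N : Subgroup G) [N.Normal], g ∉ N → Finite (G ⧸ N) →
          ∀ hnil : Group.IsNilpotent (G ⧸ N),
            n ≤ Group.nilpotencyClass (G ⧸ N) ∧ 2 ^ n ≤ Nat.card (G ⧸ N) :=
  grig_stmt11_general S hSgen hnotnil
end
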